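/- arXiv:2211.15651 — 4 statements merged into one kernel-verified Lean document; each statement's English description precedes it below -/
import Mathlib

section
/- There is no positive integer m satisfying 28350m^4 + 18900m^3 + 2700m^2 - 225m - 30 = 50625m^8. -/
theorem stmt0 : ¬ ∃ m : ℤ, 0 < m ∧
    28350*m^4 + 18900*m^3 + 2700*m^2 - 225*m - 30 = 50625*m^8 := by
  rintro ⟨m, -, h⟩
  have nine_dvd_thirty : (9 : ℤ) ∣ 30 :=
    ⟨3150*m^4 + 2100*m^3 + 300*m^2 - 25*m - 5625*m^8, by linear_combination -h⟩
  norm_num at nine_dvd_thirty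
end

section
/- If integers e with 0 ≤ e ≤ 25, r with -5 ≤ r < 0, and a rational k = n/l in lowest terms with l dividing e·r² satisfy k > 2/5 and (3k² + 4k - 1)·r⁴·e² = 675, then e = 15, r = -1, and k = 2/3. -/
set_option maxRecDepth 1000000 in
private lemma search675 : ∀ d : ℕ, d < 626 → ∀ j : ℕ, j < 16 →
    ¬ (0 < d ∧ 3*(2*d/5+1+j)*(2*d/5+1+j) + 4*(2*d/5+1+j)*d = 675 + d*d ∧
      Nat.gcd (2*d/5+1+j) d = 1) := by decide

set_option maxRecDepth 1000000 in
private lemma search75 : ∀ d : ℕ, d < 209 → ∀ j : ℕ, j < 16 →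
    ¬ (0 < d ∧ 3*(2*d/5+1+j)*(2*d/5+1+j) + 4*(2*d/5+1+j)*d = 75 + d*d ∧
      Nat.gcd (2*d/5+1+j) d = 1) := by decide

set_option maxRecDepth 1000000 in
private lemma search27 : ∀ d : ℕ, d < 126 → ∀ j : ℕ, j < 16 →
    (0 < d ∧ 3*(2*d/5+1+j)*(2*d/5+1+j) + 4*(2*d/5+1+j)*d = 27 + d*d ∧
      Nat.gcd (2*d/5+1+j) d = 1) → d = 3 ∧ j = 0 := by decide

set_option maxRecDepth 1000000 in
private lemma search3 : ∀ d : ℕ, d < 42 → ∀ j : ℕ, j < 16 →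
    ¬ (0 < d ∧ 3*(2*d/5+1+j)*(2*d/5+1+j) + 4*(2*d/5+1+j)*d = 3 + d*d ∧
      Nat.gcd (2*d/5+1+j) d = 1) := by decide

set_option maxHeartbeats 1000000 in
/-- Rational `k` is written `n/l` in lowest terms as `k.num / k.den`. -/
theorem stmt11 (e r : ℤ) (k : ℚ)
    (he0 : 0 ≤ e) (he : e ≤ 25) (hr0 : -5 ≤ r) (hr : r < 0)
    (hl : (k.den : ℤ) ∣ e * r^2)
    (hk : k > 2/5)
    (heq : (3*k^2 + 4*k - 1) * (r : ℚ)^4 * (e : ℚ)^2 = 675) :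
    e = 15 ∧ r = -1 ∧ k = 2/3 := by
  have hr2 : (1:ℤ) ≤ r^2 := by nlinarith
  have hr2' : r^2 ≤ 25 := by nlinarith
  have he1 : 1 ≤ e := by
    rcases he0.lt_or_eq with h | h
    · omega
    · exfalso
      rw [← h] at heq
      norm_num at heq
  have hd0 : (0:ℤ) < (k.den : ℤ) := by exact_mod_cast k.pos
  have hden : ((k.den:ℚ)) ≠ 0 := by
    have : (0:ℚ) < (k.den:ℚ) := by exact_mod_cast k.pos
    linarith
  have hq : (k.num : ℚ) = k * (k.den : ℚ) := (div_eq_iff hden).mp (Rat.num_div_den k)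
  have keyZ : (3*k.num^2 + 4*k.num*(k.den:ℤ) - (k.den:ℤ)^2) * (e*r^2)^2
      = 675 * (k.den:ℤ)^2 := by
    have hQ : (3*(k.num:ℚ)^2 + 4*(k.num:ℚ)*(k.den:ℚ) - (k.den:ℚ)^2) * ((e:ℚ)*(r:ℚ)^2)^2
        = 675 * (k.den:ℚ)^2 := by
      linear_combination ((k.den:ℚ))^2 * heq
        + ((3*(k.num:ℚ) + 3*k*(k.den:ℚ) + 4*(k.den:ℚ)) * ((e:ℚ)^2*(r:ℚ)^4)) * hq
    exact_mod_cast hQ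
  obtain ⟨t, ht⟩ := hl
  have hm1 : 1 ≤ e * r^2 := by nlinarith
  have hmle : e * r^2 ≤ 625 := by nlinarith
  have ht1 : 1 ≤ t := by nlinarith
  have ht2 : 1 ≤ t*t := by nlinarith
  set A := 3*k.num^2 + 4*k.num*(k.den:ℤ) - (k.den:ℤ)^2 with hA
  have hAt : A * (t*t) = 675 := by
    have h2 : (A * (t*t)) * (k.den:ℤ)^2 = 675 * (k.den:ℤ)^2 := by
      rw [ht] at keyZ
      linear_combination keyZ
    exact mul_right_cancel₀ (by positivity) h2
  have hA1 : 1 ≤ A := by nlinarith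
  have ht25 : t ≤ 25 := by nlinarith
  have h5Q : 2*(k.den:ℚ) < 5*(k.num:ℚ) := by
    have hdQ : (0:ℚ) < (k.den:ℚ) := by exact_mod_cast k.pos
    nlinarith [hq, hk, hdQ]
  have h5 : 2*(k.den:ℤ) < 5*k.num := by exact_mod_cast h5Q
  obtain ⟨N, hN⟩ : ∃ N : ℕ, k.num = (N:ℤ) := ⟨k.num.toNat, by omega⟩
  have hcopN : Nat.gcd N k.den = 1 := by
    have h := k.reduced
    have habs : k.num.natAbs = N := by omega
    rwa [habs] at h
  have h5N : 2*k.den < 5*N := by omega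
  have hcases : (t = 1 ∧ A = 675) ∨ (t = 3 ∧ A = 75) ∨ (t = 5 ∧ A = 27) ∨ (t = 15 ∧ A = 3) := by
    interval_cases t <;> omega
  -- upper bound for N
  have hup : 3*k.num ≤ (k.den:ℤ) + 45 := by
    by_contra hcon
    push_neg at hcon
    have hx : 0 ≤ 3*k.num - (k.den:ℤ) - 46 := by linarith
    have hy : 0 ≤ 3*k.num + 5*(k.den:ℤ) + 46 := by linarith
    have hAle : A ≤ 675 := by nlinarith
    nlinarith [mul_nonneg hx hy, hA, hAle]
  have hupN : 3*N ≤ k.den + 45 := by omega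
  set j := N - (2*k.den/5 + 1) with hjdef
  have hj : N = 2*k.den/5 + 1 + j := by omega
  have hj16 : j < 16 := by omega
  have hAeqN : ∀ c : ℤ, A = c → ∀ c' : ℕ, (c':ℤ) = c →
      3*N*N + 4*N*k.den = c' + k.den*k.den := by
    intro c hc c' hc'
    have hz : 3*(N:ℤ)*N + 4*N*(k.den:ℤ) = (c':ℤ) + (k.den:ℤ)*(k.den:ℤ) := by
      rw [hc']
      rw [hA] at hc
      rw [← hN]
      linear_combination hc
    exact_mod_cast hz
  rcases hcases with ⟨htv, hAv⟩ | ⟨htv, hAv⟩ | ⟨htv, hAv⟩ | ⟨htv, hAv⟩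
  · exfalso
    subst htv
    have hdb : (k.den:ℤ) ≤ 625 := by linarith [ht, hmle]
    have heqn := hAeqN 675 hAv 675 (by norm_num)
    rw [hj] at heqn hcopN
    exact search675 k.den (by omega) j hj16 ⟨k.pos, heqn, hcopN⟩
  · exfalso
    subst htv
    have hdb : (k.den:ℤ)*3 ≤ 625 := by linarith [ht, hmle]
    have heqn := hAeqN 75 hAv 75 (by norm_num)
    rw [hj] at heqn hcopN
    exact search75 k.den (by omega) j hj16 ⟨k.pos, heqn, hcopN⟩
  · -- t = 5, the solution case
    subst htv
    have hdb : (k.den:ℤ)*5 ≤ 625 := by linarith [ht, hmle]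
    have heqn := hAeqN 27 hAv 27 (by norm_num)
    rw [hj] at heqn hcopN
    obtain ⟨hd3, hj0⟩ := search27 k.den (by omega) j hj16 ⟨k.pos, heqn, hcopN⟩
    have hN2 : N = 2 := by omega
    have hnum : k.num = 2 := by omega
    have hk23 : k = 2/3 := by
      have hkk : k = (k.num:ℚ) / (k.den:ℚ) := (Rat.num_div_den k).symm
      rw [hkk, hnum, hd3]
      norm_num
    have h15 : e * r^2 = 15 := by
      rw [ht, hd3]
      norm_num
    have her : e = 15 ∧ r = -1 := by
      interval_cases r <;> norm_num at h15 <;> omega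
    exact ⟨her.1, her.2, hk23⟩
  · exfalso
    subst htv
    have hdb : (k.den:ℤ)*15 ≤ 625 := by linarith [ht, hmle]
    have heqn := hAeqN 3 hAv 3 (by norm_num)
    rw [hj] at heqn hcopN
    exact search3 k.den (by omega) j hj16 ⟨k.pos, heqn, hcopN⟩
end

section
/- The only solutions to (3k² + 4k - 1)·r⁴·d = 1344 with integer d with 0 ≤ d ≤ 1244, integer r with -5 ≤ r < 0, and rational k = n/l in lowest terms with k > 2/5 and l² ∣ d·r⁴, are exactly (d,r,k) ∈ {(3,-4,1/2), (14,-2,1), (48,-2,1/2), (224,-1,1), (768,-1,1/2)}. -/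
lemma core13 : ∀ N ∈ Finset.Icc 1 21, ∀ L ∈ Finset.Icc 1 52,
    ∀ R4 ∈ ({1,16,81,256,625} : Finset ℕ),
    Nat.Coprime N L → 2*L < 5*N →
    (3*N^2+4*N*L - L^2) ∣ 1344 →
    R4 ∣ 1344/(3*N^2+4*N*L - L^2)*L^2 →
    (1344/(3*N^2+4*N*L - L^2)*L^2/R4, R4, N, L) ∈
      ([(3,256,1,2),(14,16,1,1),(48,16,1,2),(224,1,1,1),(768,1,1,2)] : List (ℕ×ℕ×ℕ×ℕ)) := by
  decide

/-- Rational `k` is written `n/l` in lowest terms as `k.num / k.den`. -/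
theorem stmt13 (d r : ℤ) (k : ℚ) :
    (0 ≤ d ∧ d ≤ 1244 ∧ -5 ≤ r ∧ r < 0 ∧ k > 2/5 ∧
      (k.den : ℤ)^2 ∣ d * r^4 ∧
      (3*k^2 + 4*k - 1) * (r : ℚ)^4 * (d : ℚ) = 1344) ↔
    (d, r, k) ∈ ({(3, -4, 1/2), (14, -2, 1), (48, -2, 1/2),
      (224, -1, 1), (768, -1, 1/2)} : Set (ℤ × ℤ × ℚ)) := by
  constructor
  · rintro ⟨hd0, hd1, hr0, hr1, hk, hdvd, heq⟩
    set n := k.num with hn_def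
    have hden : 1 ≤ (k.den:ℤ) := by exact_mod_cast k.pos
    have hkpos : (0:ℚ) < k := lt_trans (by norm_num) hk
    have hnum : 1 ≤ n := Rat.num_pos.mpr hkpos
    have hdq : (0:ℚ) < (k.den:ℚ) := by exact_mod_cast k.pos
    have hnumq : (n:ℚ) = k * k.den := by exact_mod_cast (Rat.mul_den_eq_num k).symm
    have h25 : 2*(k.den:ℤ) < 5*n := by
      have h : (2:ℚ)*(k.den:ℚ) < 5*(n:ℚ) := by rw [hnumq]; nlinarith [hk, hdq]
      exact_mod_cast h
    set l := (k.den:ℤ) with hl_def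
    have key : (3*n^2 + 4*n*l - l^2) * (d * r^4) = 1344 * l^2 := by
      have h : ((3*n^2 + 4*n*l - l^2 : ℤ) : ℚ) * ((d:ℚ) * (r:ℚ)^4) = 1344 * ((l:ℚ))^2 := by
        push_cast [hnumq]
        linear_combination (k.den:ℚ)^2 * heq
      exact_mod_cast h
    have ht : 0 < 3*n^2+4*n*l - l^2 := by nlinarith
    obtain ⟨m, hm⟩ := hdvd
    have hr4 : 1 ≤ r^4 := by nlinarith [sq_nonneg r, sq_nonneg (r^2 - 1), sq_nonneg (r+1)]
    have hd1' : 1 ≤ d := by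
      rcases eq_or_lt_of_le hd0 with h | h
      · exfalso; rw [← h] at key; nlinarith [key]
      · omega
    have hmpos : 1 ≤ m := by nlinarith
    have htm : (3*n^2+4*n*l - l^2) * m = 1344 := by
      have h0 : l^2 ≠ 0 := by positivity
      have h2 : l^2*((3*n^2+4*n*l-l^2)*m) = l^2*1344 := by
        rw [hm] at key; linear_combination key
      exact mul_left_cancel₀ h0 h2
    have htle : 3*n^2+4*n*l-l^2 ≤ 1344 := by nlinarith
    have h4nl : 0 < l*(4*n-l) := by nlinarith
    have hn21 : n ≤ 21 := by nlinarith [sq_nonneg (n - 22)]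
    have hl52 : l ≤ 52 := by omega
    -- Pass to ℕ
    set N := k.num.natAbs with hN_def
    set L := k.den with hL_def
    have hN : (N:ℤ) = n := Int.natAbs_of_nonneg (by omega)
    have hNmem : N ∈ Finset.Icc 1 21 := by
      simp only [Finset.mem_Icc]; omega
    have hLmem : L ∈ Finset.Icc 1 52 := by
      simp only [Finset.mem_Icc]; omega
    have hcop : Nat.Coprime N L := k.reduced
    have h25' : 2*L < 5*N := by
      have : 2*(L:ℤ) < 5*(N:ℤ) := by rw [hN]; exact h25
      exact_mod_cast this
    have hba : L^2 ≤ 3*N^2+4*N*L := by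
      have : ((L^2:ℕ):ℤ) ≤ ((3*N^2+4*N*L : ℕ):ℤ) := by push_cast [hN]; linarith
      exact_mod_cast this
    have hT : ((3*N^2+4*N*L - L^2 : ℕ) : ℤ) = 3*n^2+4*n*l-l^2 := by
      push_cast [hba, hN]; ring
    set T := 3*N^2+4*N*L - L^2 with hT_def
    have hTpos : 0 < T := by
      have : (0:ℤ) < (T:ℤ) := by rw [hT]; exact ht
      exact_mod_cast this
    set M := m.toNat with hM_def
    have hMz : (M:ℤ) = m := Int.toNat_of_nonneg (by omega)
    have hTM : T * M = 1344 := by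
      have : ((T*M : ℕ):ℤ) = (1344:ℤ) := by push_cast [hT, hMz]; exact htm
      exact_mod_cast this
    have hTdvd : T ∣ 1344 := ⟨M, hTM.symm⟩
    have hMdiv : 1344 / T = M := by rw [← hTM, Nat.mul_div_cancel_left _ hTpos]
    set R := (r^4).toNat with hR_def
    have hRz : (R:ℤ) = r^4 := Int.toNat_of_nonneg (by omega)
    have hRpos : 0 < R := by
      have : (0:ℤ) < (R:ℤ) := by rw [hRz]; omega
      exact_mod_cast this
    have hDR : d.toNat * R = L^2 * M := by
      have : ((d.toNat * R : ℕ):ℤ) = ((L^2 * M : ℕ):ℤ) := by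
        push_cast [hRz, hMz, Int.toNat_of_nonneg hd0, hl_def]
        exact_mod_cast hm
      exact_mod_cast this
    have hRdvd : R ∣ 1344 / T * L^2 := by
      rw [hMdiv, mul_comm M (L^2)]
      rw [← hDR]; exact dvd_mul_left R d.toNat
    have hDval : 1344 / T * L^2 / R = d.toNat := by
      rw [hMdiv, mul_comm M (L^2), ← hDR]
      exact Nat.mul_div_cancel _ hRpos
    have hdt : (d.toNat : ℤ) = d := Int.toNat_of_nonneg hd0
    simp only [Set.mem_insert_iff, Set.mem_singleton_iff, Prod.mk.injEq]
    interval_cases r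
    · -- r = -5, R = 625
      have hR625 : R = 625 := by
        have : (R:ℤ) = 625 := by rw [hRz]; norm_num
        exact_mod_cast this
      have := core13 N hNmem L hLmem R (by rw [hR625]; decide) hcop h25' hTdvd hRdvd
      rw [hDval, hR625] at this
      simp at this
    · -- r = -4, R = 256
      have hR' : R = 256 := by
        have : (R:ℤ) = 256 := by rw [hRz]; norm_num
        exact_mod_cast this
      have hmem := core13 N hNmem L hLmem R (by rw [hR']; decide) hcop h25' hTdvd hRdvd
      rw [hDval, hR'] at hmem
      simp only [List.mem_cons, List.mem_singleton, Prod.mk.injEq, List.not_mem_nil, or_false] at hmem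
      rcases hmem with ⟨hD, _, hN1, hL2⟩ | h | h | h | h
      · left
        have hk2 : k = 1/2 := by
          have h1 : k.num = 1 := by omega
          have h2 : k.den = 2 := hL2
          rw [← Rat.num_div_den k, h1, h2]; norm_num
        exact ⟨by omega, rfl, hk2⟩
      all_goals omega
    · -- r = -3, R = 81
      have hR' : R = 81 := by
        have : (R:ℤ) = 81 := by rw [hRz]; norm_num
        exact_mod_cast this
      have hmem := core13 N hNmem L hLmem R (by rw [hR']; decide) hcop h25' hTdvd hRdvd
      rw [hDval, hR'] at hmem
      simp at hmem
    · -- r = -2, R = 16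
      have hR' : R = 16 := by
        have : (R:ℤ) = 16 := by rw [hRz]; norm_num
        exact_mod_cast this
      have hmem := core13 N hNmem L hLmem R (by rw [hR']; decide) hcop h25' hTdvd hRdvd
      rw [hDval, hR'] at hmem
      simp only [List.mem_cons, List.mem_singleton, Prod.mk.injEq, List.not_mem_nil, or_false] at hmem
      rcases hmem with h | ⟨hD, _, hN1, hL1⟩ | ⟨hD, _, hN1, hL2⟩ | h | h
      · omega
      · right; left
        have hk1 : k = 1 := by
          have h1 : k.num = 1 := by omega
          have h2 : k.den = 1 := hL1
          rw [← Rat.num_div_den k, h1, h2]; norm_num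
        exact ⟨by omega, rfl, hk1⟩
      · right; right; left
        have hk2 : k = 1/2 := by
          have h1 : k.num = 1 := by omega
          have h2 : k.den = 2 := hL2
          rw [← Rat.num_div_den k, h1, h2]; norm_num
        exact ⟨by omega, rfl, hk2⟩
      all_goals omega
    · -- r = -1, R = 1
      have hR' : R = 1 := by
        have : (R:ℤ) = 1 := by rw [hRz]; norm_num
        exact_mod_cast this
      have hmem := core13 N hNmem L hLmem R (by rw [hR']; decide) hcop h25' hTdvd hRdvd
      rw [hDval, hR'] at hmem
      simp only [List.mem_cons, List.mem_singleton, Prod.mk.injEq, List.not_mem_nil, or_false] at hmem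
      rcases hmem with h | h | h | ⟨hD, _, hN1, hL1⟩ | ⟨hD, _, hN1, hL2⟩
      · omega
      · omega
      · omega
      · right; right; right; left
        have hk1 : k = 1 := by
          have h1 : k.num = 1 := by omega
          have h2 : k.den = 1 := hL1
          rw [← Rat.num_div_den k, h1, h2]; norm_num
        exact ⟨by omega, rfl, hk1⟩
      · right; right; right; right
        have hk2 : k = 1/2 := by
          have h1 : k.num = 1 := by omega
          have h2 : k.den = 2 := hL2
          rw [← Rat.num_div_den k, h1, h2]; norm_num
        exact ⟨by omega, rfl, hk2⟩
  · intro h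
    simp only [Set.mem_insert_iff, Set.mem_singleton_iff, Prod.mk.injEq] at h
    rcases h with ⟨h1, h2, h3⟩ | ⟨h1, h2, h3⟩ | ⟨h1, h2, h3⟩ | ⟨h1, h2, h3⟩ | ⟨h1, h2, h3⟩ <;>
      subst h1 <;> subst h2 <;> subst h3 <;>
      refine ⟨by norm_num, by norm_num, by norm_num, by norm_num, by norm_num, ?_, by norm_num⟩ <;>
      norm_num [Rat.den_div_eq_of_coprime]
end

section
/- Suppose integers e, r and a rational k satisfy k = n/l in lowest terms with l ∣ e·r², 0 ≤ e ≤ 81, 0 < r ≤ 5, k > 2/5, and (3k² + 4k - 1)·r⁴·e² = 675. Then (e, r, k) is one of (15,1,2/3), (25,1,2/5), (60,1,1/4), (15,2,1/4), or (1,5,2/5). -/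
set_option synthInstance.maxHeartbeats 1000000 in
set_option synthInstance.maxSize 2000 in
set_option maxHeartbeats 2000000 in
lemma key19 : ∀ a < 21, ∀ b < 25, ∀ t < 26, (0 < t ∧ 0 < b ∧ Nat.gcd a b = 1 ∧ 2*b < 5*a ∧
    (3*a^2+4*a*b)*t^2 = 675 + b^2*t^2) → a = 2 ∧ b = 3 ∧ t = 5 := by decide

/-- Rational `k` is written `n/l` in lowest terms as `k.num / k.den`. -/
theorem stmt19 (e r : ℤ) (k : ℚ)
    (hl : (k.den : ℤ) ∣ e * r^2)
    (he0 : 0 ≤ e) (he : e ≤ 81) (hr0 : 0 < r) (hr : r ≤ 5)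
    (hk : k > 2/5)
    (heq : (3*k^2 + 4*k - 1) * (r : ℚ)^4 * (e : ℚ)^2 = 675) :
    (e, r, k) ∈ ({(15, 1, 2/3), (25, 1, 2/5), (60, 1, 1/4),
      (15, 2, 1/4), (1, 5, 2/5)} : Set (ℤ × ℤ × ℚ)) := by
  set a := k.num with ha0
  set b := (k.den : ℤ) with hb0
  have hb1 : 0 < b := by rw [hb0]; exact_mod_cast k.pos
  have hbQ : ((b : ℚ)) ≠ 0 := by positivity
  have hbQ' : ((k.den : ℚ)) ≠ 0 := by exact_mod_cast k.den_nz
  have he1 : 0 < e := by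
    rcases he0.lt_or_eq with h | h
    · exact h
    · exfalso; rw [← h] at heq; push_cast at heq; simp at heq
  have h5 : 2*b < 5*a := by
    have hkq : (2:ℚ)/5 < (a : ℚ)/(b : ℚ) := by
      rw [ha0, hb0]; push_cast; rw [Rat.num_div_den]; exact hk
    have h2 := (div_lt_div_iff₀ (by norm_num) (by exact_mod_cast hb1)).mp hkq
    have h3 : (2*b : ℚ) < 5*a := by linarith
    exact_mod_cast h3
  obtain ⟨t, htdef⟩ := hl
  have ht1 : 0 < t := by nlinarith
  have ha1 : 0 < a := by linarith
  have haq : (a : ℚ) = k * (b : ℚ) := by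
    rw [ha0, hb0]; push_cast
    exact (div_eq_iff hbQ').mp (Rat.num_div_den k)
  have het : (e:ℚ)*(r:ℚ)^2 = (b:ℚ)*(t:ℚ) := by exact_mod_cast congrArg (Int.cast : ℤ → ℚ) htdef
  have hZ : (3*a^2+4*a*b-b^2)*t^2 = 675 := by
    have hq : ((3*a^2+4*a*b-b^2 : ℤ) : ℚ) * ((t:ℤ):ℚ)^2 = 675 := by
      push_cast
      linear_combination (3*((a:ℚ)+k*b)+4*(b:ℚ))*(t:ℚ)^2 * haq
        - (3*k^2+4*k-1)*((b:ℚ)*t+(e:ℚ)*(r:ℚ)^2) * het + heq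
    exact_mod_cast hq
  have hs : 0 < 3*a^2+4*a*b-b^2 := by nlinarith
  have htle : t ≤ 25 := by nlinarith
  have hsle : 3*a^2+4*a*b-b^2 ≤ 675 := by
    nlinarith [mul_nonneg (by nlinarith : (0:ℤ) ≤ t^2 - 1) hs.le]
  have hble : b ≤ 24 := by
    nlinarith [mul_nonneg (by linarith : (0:ℤ) ≤ 5*a-2*b-1) (by linarith : (0:ℤ) ≤ 5*a+2*b+1),
      mul_nonneg hb1.le (by linarith : (0:ℤ) ≤ 5*a-2*b-1)]
  have hale : a ≤ 20 := by
    nlinarith [mul_pos ha1 hb1,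
      mul_nonneg (by linarith : (0:ℤ) ≤ 24 - b) (by linarith : (0:ℤ) ≤ b - 1)]
  have hgcd : Nat.gcd a.toNat b.toNat = 1 := by
    have h1 : a.toNat = a.natAbs := by omega
    have h2 : b.toNat = k.den := by rw [hb0]; omega
    rw [h1, h2]; exact k.reduced
  have hk2 := key19 a.toNat (by omega) b.toNat (by omega) t.toNat (by omega)
    ⟨by omega, by omega, hgcd, by omega, by
      have h : ((3*a.toNat^2+4*a.toNat*b.toNat)*t.toNat^2 : ℤ)
          = ((675 + b.toNat^2*t.toNat^2 : ℕ) : ℤ) := by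
        push_cast [Int.toNat_of_nonneg ha1.le, Int.toNat_of_nonneg hb1.le,
          Int.toNat_of_nonneg ht1.le]
        linarith [hZ]
      exact_mod_cast h⟩
  obtain ⟨ha2, hb3, ht5⟩ := hk2
  have hb3' : b = 3 := by omega
  have ht5' : t = 5 := by omega
  have hkval : k = 2/3 := by
    have hd : k.den = 3 := by omega
    have hn : k.num = 2 := by omega
    rw [← Rat.num_div_den k, hn, hd]; norm_num
  have her : e * r^2 = 15 := by rw [htdef, hb3', ht5']; norm_num
  have hre : r = 1 ∧ e = 15 := by
    interval_cases r <;> omega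
  left
  simp [hre.1, hre.2, hkval]
end
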